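/- arXiv:2405.15948 — 2 statements merged into one kernel-verified Lean document; each statement's English description precedes it below -/
import Mathlib

section
/- Suppose the target distribution T has density ratio w with respect to the source distribution S, i.e., E_T[f(X)] = E_S[w(X)f(X)] for all bounded measurable f. If m̃ satisfies the weighted multicalibration condition |E_S[w̃(X)c(X)(m̃(X) - m(X))]| ≤ α' for a given function c bounded by C̃, and m̃, m are bounded by C̃, then |E_T[c(X)(m̃(X) - m(X))]| ≤ α' + C̃²·E_S|w(X) - w̃(X)|. -/
open MeasureTheory

/-- Transfer of a weighted calibration guarantee from the source `S` to the target `T`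
with density ratio `w`: if `|E_S[w̃ c (m̃ - m)]| ≤ α'`, then
`|E_T[c (m̃ - m)]| ≤ α' + C̃² E_S|w - w̃|`. -/
theorem stmt7 {𝒳 : Type*} [MeasurableSpace 𝒳]
    (S T : Measure 𝒳) [IsProbabilityMeasure S] [IsProbabilityMeasure T]
    (w wt c mt m : 𝒳 → ℝ) (Ctil α' : ℝ) (hCtil : 0 < Ctil) (hα' : 0 ≤ α')
    (hdensity : ∀ f : 𝒳 → ℝ, Measurable f → (∃ K, ∀ x, |f x| ≤ K) →
      (∫ x, f x ∂T) = ∫ x, w x * f x ∂S)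
    (hwm : Measurable w) (hwtm : Measurable wt) (hcm : Measurable c)
    (hmtm : Measurable mt) (hmm : Measurable m)
    (hw : ∀ x, |w x| ≤ Ctil) (hwt : ∀ x, |wt x| ≤ Ctil) (hc : ∀ x, |c x| ≤ Ctil)
    (hmt : ∀ x, mt x ∈ Set.Icc 0 Ctil) (hm : ∀ x, m x ∈ Set.Icc 0 Ctil)
    (hcal : |∫ x, wt x * (c x * (mt x - m x)) ∂S| ≤ α') :
    |∫ x, c x * (mt x - m x) ∂T| ≤ α' + Ctil ^ 2 * ∫ x, |w x - wt x| ∂S := by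
  set g : 𝒳 → ℝ := fun x => c x * (mt x - m x) with hg
  have hgm : Measurable g := hcm.mul (hmtm.sub hmm)
  have hgb : ∀ x, |g x| ≤ Ctil * Ctil := by
    intro x
    have h1 : |mt x - m x| ≤ Ctil := by
      rw [abs_sub_le_iff]
      constructor <;> nlinarith [(hmt x).1, (hmt x).2, (hm x).1, (hm x).2]
    calc |g x| = |c x| * |mt x - m x| := abs_mul _ _
    _ ≤ Ctil * Ctil := mul_le_mul (hc x) h1 (abs_nonneg _) hCtil.le
  have key : (∫ x, g x ∂T) = ∫ x, w x * g x ∂S :=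
    hdensity g hgm ⟨Ctil * Ctil, hgb⟩
  have intwg : Integrable (fun x => w x * g x) S := by
    refine (integrable_const (Ctil * (Ctil * Ctil))).mono'
      (hwm.mul hgm).aestronglyMeasurable (Filter.Eventually.of_forall fun x => ?_)
    rw [Real.norm_eq_abs, abs_mul]
    exact mul_le_mul (hw x) (hgb x) (abs_nonneg _) hCtil.le
  have intwtg : Integrable (fun x => wt x * g x) S := by
    refine (integrable_const (Ctil * (Ctil * Ctil))).mono'
      (hwtm.mul hgm).aestronglyMeasurable (Filter.Eventually.of_forall fun x => ?_)
    rw [Real.norm_eq_abs, abs_mul]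
    exact mul_le_mul (hwt x) (hgb x) (abs_nonneg _) hCtil.le
  have intabs : Integrable (fun x => |w x - wt x|) S := by
    refine (integrable_const (Ctil + Ctil)).mono'
      ((hwm.sub hwtm).abs).aestronglyMeasurable (Filter.Eventually.of_forall fun x => ?_)
    rw [Real.norm_eq_abs, abs_abs]
    exact (abs_sub _ _).trans (add_le_add (hw x) (hwt x))
  have hdiff : |(∫ x, w x * g x ∂S) - ∫ x, wt x * g x ∂S|
      ≤ Ctil ^ 2 * ∫ x, |w x - wt x| ∂S := by
    rw [← integral_sub intwg intwtg]
    calc |∫ x, (w x * g x - wt x * g x) ∂S|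
        ≤ ∫ x, |w x * g x - wt x * g x| ∂S := by
          simpa [Real.norm_eq_abs] using norm_integral_le_integral_norm (fun x => w x * g x - wt x * g x) (μ := S)
      _ ≤ ∫ x, Ctil ^ 2 * |w x - wt x| ∂S := by
          refine integral_mono_of_nonneg (Filter.Eventually.of_forall fun x => abs_nonneg _)
            (intabs.const_mul _) (Filter.Eventually.of_forall fun x => ?_)
          simp only
          have h : w x * g x - wt x * g x = (w x - wt x) * g x := by ring
          rw [h, abs_mul, mul_comm]
          have := hgb x
          nlinarith [abs_nonneg (w x - wt x), abs_nonneg (g x)]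
      _ = Ctil ^ 2 * ∫ x, |w x - wt x| ∂S := integral_const_mul _ _
  calc |∫ x, g x ∂T| = |(∫ x, w x * g x ∂S) - (∫ x, wt x * g x ∂S) + ∫ x, wt x * g x ∂S| := by
        rw [key]; ring_nf
    _ ≤ |(∫ x, w x * g x ∂S) - ∫ x, wt x * g x ∂S| + |∫ x, wt x * g x ∂S| := abs_add_le _ _
    _ ≤ Ctil ^ 2 * (∫ x, |w x - wt x| ∂S) + α' := add_le_add hdiff hcal
    _ = α' + Ctil ^ 2 * ∫ x, |w x - wt x| ∂S := by ring
end

section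
/- Let Err = |E_T[m̃(X)] - τ| denote the target-population estimation error of a calibrated predictor m̃, where E_T[f] = E_S[w·f]. Suppose m̃, m are bounded by C̃, |E_S[h(X)(m̃(X) - m(X))]| ≤ α' for all h in a class H, and let τ_ps(w̃) = E_S[w̃(X)·m(X)] with error Err_ps = |τ_ps(w̃) - τ|. Then Err ≤ C̃·inf_{h ∈ H}(E_S|w - h| + E_S|h - w̃|) + α' + Err_ps. -/
open MeasureTheory

/-- Universal adaptability of a multicalibrated predictor: the target estimation error
`Err = |E_T[m̃] - τ| = |E_S[w m̃] - τ]|` satisfies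
`Err ≤ C̃ inf_{h ∈ H}(E_S|w - h| + E_S|h - w̃|) + α' + Err_ps`. -/
theorem stmt17 {𝒳 : Type*} [MeasurableSpace 𝒳] (S : Measure 𝒳) [IsProbabilityMeasure S]
    (H : Set (𝒳 → ℝ)) (hHne : H.Nonempty)
    (w wt mt m : 𝒳 → ℝ) (Ctil α' τ : ℝ) (hCtil : 0 < Ctil) (hα' : 0 ≤ α')
    (hw : ∀ x, |w x| ≤ Ctil) (hwt : ∀ x, |wt x| ≤ Ctil)
    (hHbdd : ∀ h ∈ H, ∀ x, |h x| ≤ Ctil)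
    (hmt : ∀ x, mt x ∈ Set.Icc 0 Ctil) (hm : ∀ x, m x ∈ Set.Icc 0 Ctil)
    (hiwmt : Integrable (fun x => w x * mt x) S)
    (hiwtm : Integrable (fun x => wt x * m x) S)
    (hiH : ∀ h ∈ H, Integrable (fun x => h x * (mt x - m x)) S)
    (hi1 : ∀ h ∈ H, Integrable (fun x => |w x - h x|) S)
    (hi2 : ∀ h ∈ H, Integrable (fun x => |h x - wt x|) S)
    (hcal : ∀ h ∈ H, |∫ x, h x * (mt x - m x) ∂S| ≤ α') :
    |(∫ x, w x * mt x ∂S) - τ| ≤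
      Ctil * sInf ((fun h => (∫ x, |w x - h x| ∂S) + ∫ x, |h x - wt x| ∂S) '' H) +
        α' + |(∫ x, wt x * m x ∂S) - τ| := by
  have key : ∀ h ∈ H,
      |(∫ x, w x * mt x ∂S) - τ| - α' - |(∫ x, wt x * m x ∂S) - τ|
        ≤ Ctil * ((∫ x, |w x - h x| ∂S) + ∫ x, |h x - wt x| ∂S) := by
    intro h hh
    have hg : Integrable (fun x => (w x * mt x - wt x * m x) - h x * (mt x - m x)) S :=
      (hiwmt.sub hiwtm).sub (hiH h hh)
    have hdecomp : (∫ x, w x * mt x ∂S)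
        = (∫ x, ((w x * mt x - wt x * m x) - h x * (mt x - m x)) ∂S)
          + (∫ x, h x * (mt x - m x) ∂S) + (∫ x, wt x * m x ∂S) := by
      rw [show (fun x => w x * mt x) = fun x =>
          ((w x * mt x - wt x * m x - h x * (mt x - m x)) + h x * (mt x - m x)) + wt x * m x
          from funext fun x => by ring]
      have hg2 : Integrable (fun x =>
          (w x * mt x - wt x * m x - h x * (mt x - m x)) + h x * (mt x - m x)) S :=
        hg.add (hiH h hh)
      rw [integral_add hg2 hiwtm, integral_add hg (hiH h hh)]
    have hb : ∫ x, |(w x * mt x - wt x * m x) - h x * (mt x - m x)| ∂S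
        ≤ Ctil * (∫ x, |w x - h x| ∂S) + Ctil * (∫ x, |h x - wt x| ∂S) := by
      rw [← integral_const_mul, ← integral_const_mul,
        ← integral_add ((hi1 h hh).const_mul _) ((hi2 h hh).const_mul _)]
      apply integral_mono hg.abs (((hi1 h hh).const_mul _).add ((hi2 h hh).const_mul _))
      intro x
      simp only [Pi.add_apply]
      show |(w x * mt x - wt x * m x) - h x * (mt x - m x)|
          ≤ Ctil * |w x - h x| + Ctil * |h x - wt x|
      have h1 : (w x * mt x - wt x * m x) - h x * (mt x - m x)
          = (w x - h x) * mt x + (h x - wt x) * m x := by ring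
      rw [h1]
      have hmt1 := hmt x
      have hm1 := hm x
      simp only [Set.mem_Icc] at hmt1 hm1
      have hmta : |mt x| ≤ Ctil := abs_le.mpr ⟨by linarith [hmt1.1], hmt1.2⟩
      have hma : |m x| ≤ Ctil := abs_le.mpr ⟨by linarith [hm1.1], hm1.2⟩
      calc |(w x - h x) * mt x + (h x - wt x) * m x|
          ≤ |(w x - h x) * mt x| + |(h x - wt x) * m x| := abs_add_le _ _
        _ ≤ Ctil * |w x - h x| + Ctil * |h x - wt x| := by
            rw [abs_mul, abs_mul]
            have := abs_nonneg (w x - h x)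
            have := abs_nonneg (h x - wt x)
            nlinarith
    have habs1 : |∫ x, ((w x * mt x - wt x * m x) - h x * (mt x - m x)) ∂S|
        ≤ ∫ x, |(w x * mt x - wt x * m x) - h x * (mt x - m x)| ∂S := by
      simpa [Real.norm_eq_abs] using norm_integral_le_integral_norm
        (μ := S) (fun x => (w x * mt x - wt x * m x) - h x * (mt x - m x))
    have hcal' := hcal h hh
    have := abs_sub_abs_le_abs_sub (∫ x, w x * mt x ∂S - τ) (∫ x, wt x * m x ∂S - τ)
    have htri : |(∫ x, w x * mt x ∂S) - τ| - |(∫ x, wt x * m x ∂S) - τ|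
        ≤ |(∫ x, ((w x * mt x - wt x * m x) - h x * (mt x - m x)) ∂S)
            + (∫ x, h x * (mt x - m x) ∂S)| := by
      calc |(∫ x, w x * mt x ∂S) - τ| - |(∫ x, wt x * m x ∂S) - τ|
          ≤ |(∫ x, w x * mt x ∂S - τ) - ((∫ x, wt x * m x ∂S) - τ)| := this
        _ = |(∫ x, ((w x * mt x - wt x * m x) - h x * (mt x - m x)) ∂S)
            + (∫ x, h x * (mt x - m x) ∂S)| := by rw [hdecomp]; congr 1; ring
    have habs2 := abs_add_le (∫ x, ((w x * mt x - wt x * m x) - h x * (mt x - m x)) ∂S)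
      (∫ x, h x * (mt x - m x) ∂S)
    linarith
  obtain ⟨h0, hh0⟩ := hHne
  set c := |(∫ x, w x * mt x ∂S) - τ| - α' - |(∫ x, wt x * m x ∂S) - τ| with hc
  have hle : c / Ctil ≤ sInf ((fun h => (∫ x, |w x - h x| ∂S) + ∫ x, |h x - wt x| ∂S) '' H) := by
    apply le_csInf ⟨_, Set.mem_image_of_mem _ hh0⟩
    rintro y ⟨h, hh, rfl⟩
    rw [div_le_iff₀ hCtil]
    calc c ≤ Ctil * ((∫ x, |w x - h x| ∂S) + ∫ x, |h x - wt x| ∂S) := key h hh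
      _ = _ := by ring
  rw [div_le_iff₀ hCtil] at hle
  nlinarith
end
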